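/- Define G_α ∈ Λ(Q^n) for α ∈ {0,1}^n recursively by G_{1^s 0^{n-s}} = F_s and G_{u 0 1^s 0^{n-k-s}} = G_{u 1^s 0^{n-k-s+1}} - (-1)^{m(u)} θ_k G_{u 1^{s-1} 0^{n-k-s+2}} where u has length k-1 and m(u) is the number of 1s in u. Then the lexicographically largest monomial appearing in G_α (with ordering θ_1 > θ_2 > ... > θ_n on variables, exponent-vector lex order on monomials) is θ^α, with coefficient 1. -/

import Mathlib

open ExteriorAlgebra

attribute [local instance] Classical.propDecidable

/-- The generator `θ_i` of the exterior algebra `Λ(ℚ^n)`. -/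
noncomputable def theta (n : ℕ) (i : Fin n) : ExteriorAlgebra ℚ (Fin n → ℚ) :=
  ExteriorAlgebra.ι ℚ (Pi.single i (1 : ℚ))

/-- For `A = {a_1 < ⋯ < a_k}`, the monomial `θ_A = θ_{a_1} ⋯ θ_{a_k}`. -/
noncomputable def thetaA (n : ℕ) (A : Finset (Fin n)) : ExteriorAlgebra ℚ (Fin n → ℚ) :=
  ((A.sort (· ≤ ·)).map (theta n)).prod

/-- The fundamental quasisymmetric invariant `F_{1^r} = Σ_{|A| = r} θ_A`. -/
noncomputable def Fq (n r : ℕ) : ExteriorAlgebra ℚ (Fin n → ℚ) :=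
  ∑ A ∈ Finset.powersetCard r (Finset.univ : Finset (Fin n)), thetaA n A

/-- Number of ones in `α` among the first `p` positions (0-indexed). -/
def onesBelow {n : ℕ} (α : Fin n → Bool) (p : ℕ) : ℕ :=
  (Finset.univ.filter (fun i : Fin n => (i : ℕ) < p ∧ α i = true)).card

/-- `G : ({0,1}^n → Λ(ℚ^n))` satisfies the defining recursion of the `G_α`:
`G_{1^s 0^{n-s}} = F_s`, and for a word `u 0 1^s 0^{n-k-s}` (here `u = β` on the
`p = k-1` first 0-indexed positions, the distinguished `0` at 0-indexed position `p`,
then a block of `s ≥ 1` ones),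
`G_{u01^s0^{n-k-s}} = G_{u1^s0^{n-k-s+1}} - (-1)^{m_1(u)} θ_k G_{u1^{s-1}0^{n-k-s+2}}`. -/
def GRec (n : ℕ) (G : (Fin n → Bool) → ExteriorAlgebra ℚ (Fin n → ℚ)) : Prop :=
  (∀ s : ℕ, s ≤ n → G (fun i => decide ((i : ℕ) < s)) = Fq n s) ∧
  (∀ (β : Fin n → Bool) (p s : ℕ) (hs : 1 ≤ s) (hps : p + s < n),
    G (fun i => if (i : ℕ) < p then β i else decide (p < (i : ℕ) ∧ (i : ℕ) ≤ p + s))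
    = G (fun i => if (i : ℕ) < p then β i else decide ((i : ℕ) < p + s))
      - ((-1 : ℚ) ^ onesBelow β p) •
        (theta n ⟨p, by omega⟩ *
          G (fun i => if (i : ℕ) < p then β i else decide ((i : ℕ) < p + s - 1))))
/-- `β` is lexicographically smaller than `α` as an exponent vector (with
`θ_1 > θ_2 > ⋯ > θ_n`): at the first position where they differ, `β` has a `0`
and `α` has a `1`. -/
def LexLt {n : ℕ} (β α : Fin n → Bool) : Prop :=
  ∃ j : Fin n, (∀ i : Fin n, i < j → β i = α i) ∧ β j = false ∧ α j = true

/-- The monomial `θ^α`. -/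
noncomputable def thetaMon {n : ℕ} (α : Fin n → Bool) : ExteriorAlgebra ℚ (Fin n → ℚ) :=
  thetaA n (Finset.univ.filter (fun i => α i = true))

/-!
Number the positions, and the generators `θ_i`, from `0`. Suppose that from position `q` on
the word `α` reads `1^a 0^b`. Then `G_α` is congruent to the sum of the `θ^B` over the words `B`
that agree with `α` before `q` and have `a` ones from `q` on, modulo the span of the `θ^B` with
`B <lex α` whose first difference with `α` lies before `q`. At `q = n` the sum is `θ^α` alone.

The congruence is proved by induction on `q`; at `q = 0` it is `G_{1^a 0^b} = F_a`. If `α`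
already has the form `1^* 0^*` from `q - 1` on, the words that drop out of the sum when the
cut moves to `q` first differ from `α` at `q - 1`, where they have a `0` and `α` a `1`.
Otherwise `α = u 0 1^a 0^b` with `u` of length `q - 1`, and both words on the right of the
recursion are of the form `u 1^c 0^d`, covered by the induction hypothesis at `q - 1`.
Multiplying by `θ_{q-1}` maps the words counted for `u 1^(a-1) 0^(b+1)` that have a `0` at
`q - 1` bijectively, with the sign `(-1)^{m(u)}`, onto the words counted for `u 1^a 0^b` that
have a `1` there, so the recursion cancels exactly these and leaves the sum for `α` at `q`. The
error terms stay in the span since multiplying by `θ_{q-1}` keeps a first difference that lies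
before `q - 1`.
-/

open Finset

lemma Finset.sort_insert_eq_orderedInsert {ι : Type*} [LinearOrder ι] [DecidableEq ι]
    [DecidableRel (α := ι) (· ≤ ·)] {p : ι} {A : Finset ι} (hp : p ∉ A) :
    (insert p A).sort (· ≤ ·) = (A.sort (· ≤ ·)).orderedInsert (· ≤ ·) p :=
  List.Perm.eq_of_pairwise' (pairwise_sort _ _) ((pairwise_sort _ _).orderedInsert p _) <|
    (sort_perm_toList _ _).trans <| (toList_insert hp).trans <|
      ((sort_perm_toList _ _).symm.cons p).trans (List.perm_orderedInsert _ p _).symm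

section ThetaProducts

variable {n : ℕ}

lemma theta_anticomm (i j : Fin n) : theta n i * theta n j = -(theta n j * theta n i) :=
  eq_neg_of_add_eq_zero_left (ι_add_mul_swap _ _)

lemma theta_mul_self (i : Fin n) : theta n i * theta n i = 0 :=
  ι_sq_zero _

lemma theta_mul_prod_eq_zero {p : Fin n} {l : List (Fin n)} (hp : p ∈ l) :
    theta n p * (l.map (theta n)).prod = 0 := by
  induction l with
  | nil => simp at hp
  | cons a l ih =>
    rw [List.map_cons, List.prod_cons, ← mul_assoc]
    rcases List.mem_cons.1 hp with rfl | hp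
    · rw [theta_mul_self, zero_mul]
    · rw [theta_anticomm, neg_mul, mul_assoc, ih hp, mul_zero, neg_zero]

lemma theta_mul_prod_of_pairwise {p : Fin n} {l : List (Fin n)} (hl : l.Pairwise (· ≤ ·))
    (hp : p ∉ l) :
    theta n p * (l.map (theta n)).prod
      = (-1 : ℚ) ^ l.countP (· < p) • ((l.orderedInsert (· ≤ ·) p).map (theta n)).prod := by
  induction l with
  | nil => simp
  | cons a l ih =>
    obtain ⟨hal, hl⟩ := List.pairwise_cons.1 hl
    obtain ⟨-, hpl⟩ := not_or.1 (List.mem_cons.not.1 hp)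
    by_cases hle : p ≤ a
    · have hcount : (a :: l).countP (· < p) = 0 :=
        List.countP_eq_zero.2 fun x hx => by
          rcases List.mem_cons.1 hx with rfl | hx
          · simpa using hle
          · simpa using hle.trans (hal x hx)
      simp [hle, hcount]
    · have hap : a < p := lt_of_not_ge hle
      rw [List.orderedInsert_cons, if_neg hle, List.countP_cons_of_pos (by simpa using hap),
        List.map_cons, List.prod_cons, ← mul_assoc, theta_anticomm, neg_mul, mul_assoc,
        ih hl hpl, List.map_cons, List.prod_cons, mul_smul_comm, pow_succ, mul_neg_one, neg_smul]

lemma theta_mul_thetaA_of_mem {p : Fin n} {A : Finset (Fin n)} (hp : p ∈ A) :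
    theta n p * thetaA n A = 0 :=
  theta_mul_prod_eq_zero ((mem_sort _).2 hp)

lemma theta_mul_thetaA_of_notMem {p : Fin n} {A : Finset (Fin n)} (hp : p ∉ A) :
    theta n p * thetaA n A = (-1 : ℚ) ^ #{a ∈ A | a < p} • thetaA n (insert p A) := by
  have hcount : (A.sort (· ≤ ·)).countP (· < p) = #{a ∈ A | a < p} := by
    rw [← Multiset.coe_countP, sort_eq, Multiset.countP_eq_card_filter]
    rfl
  rw [thetaA, theta_mul_prod_of_pairwise (pairwise_sort _ _) (by simpa using hp), hcount,
    thetaA, sort_insert_eq_orderedInsert hp]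

end ThetaProducts

section Words

variable {n : ℕ}

lemma onesBelow_congr {α β : Fin n → Bool} {p : ℕ} (h : ∀ i : Fin n, (i : ℕ) < p → α i = β i) :
    onesBelow α p = onesBelow β p := by
  unfold onesBelow
  congr 1
  ext i
  simp only [mem_filter, mem_univ, true_and, and_congr_right_iff]
  exact fun hi => by rw [h i hi]

lemma theta_mul_thetaMon_of_true {B : Fin n → Bool} {p : Fin n} (h : B p = true) :
    theta n p * thetaMon B = 0 :=
  theta_mul_thetaA_of_mem (by simp [h])

lemma theta_mul_thetaMon_of_false {B : Fin n → Bool} {p : Fin n} (h : B p = false) :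
    theta n p * thetaMon B
      = (-1 : ℚ) ^ onesBelow B p • thetaMon (Function.update B p true) := by
  rw [thetaMon, theta_mul_thetaA_of_notMem (by simp [h]), thetaMon, onesBelow, filter_filter]
  congr 2
  · congr 1
    ext i
    simp [and_comm]
  · ext i
    by_cases hi : i = p <;> simp [hi, Function.update_apply]

end Words

section OnesFrom

variable {n : ℕ}

def onesFrom (β : Fin n → Bool) (q : ℕ) : ℕ :=
  #{i : Fin n | q ≤ (i : ℕ) ∧ β i = true}

lemma onesFrom_congr {α β : Fin n → Bool} {q : ℕ} (h : ∀ i : Fin n, q ≤ (i : ℕ) → α i = β i) :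
    onesFrom α q = onesFrom β q := by
  unfold onesFrom
  congr 1
  ext i
  simp only [mem_filter, mem_univ, true_and, and_congr_right_iff]
  exact fun hi => by rw [h i hi]

lemma onesFrom_eq_toNat_add (β : Fin n → Bool) (p : Fin n) :
    onesFrom β p = (β p).toNat + onesFrom β (p + 1) := by
  have hsplit : univ.filter (fun i : Fin n => (p : ℕ) ≤ i ∧ β i = true)
      = univ.filter (fun i => i = p ∧ β i = true) ∪
          univ.filter (fun i : Fin n => (p : ℕ) + 1 ≤ i ∧ β i = true) := by
    ext i
    simp only [mem_filter, mem_univ, true_and, mem_union, ← Fin.val_inj]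
    by_cases hi : (i : ℕ) = p
    · simp [hi]
    · constructor
      · exact fun h => Or.inr ⟨by omega, h.2⟩
      · rintro (h | h) <;> exact ⟨by omega, h.2⟩
  rw [onesFrom, hsplit, card_union_of_disjoint, onesFrom]
  · rw [filter_and, filter_eq']
    cases h : β p <;> simp [h]
  · exact disjoint_filter.2 fun i _ h1 h2 => by rw [h1.1] at h2; omega

lemma onesFrom_update_self (β : Fin n → Bool) (p : Fin n) (b : Bool) :
    onesFrom (Function.update β p b) p = b.toNat + onesFrom β (p + 1) := by
  rw [onesFrom_eq_toNat_add, Function.update_self,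
    onesFrom_congr fun i hi => Function.update_of_ne (fun h => by omega) _ _]

lemma card_filter_le_and_lt (q m : ℕ) (hm : m ≤ n) :
    #(univ.filter fun i : Fin n => q ≤ (i : ℕ) ∧ (i : ℕ) < m) = m - q := by
  have hdiff : univ.filter (fun i : Fin n => q ≤ (i : ℕ) ∧ (i : ℕ) < m)
      = univ.filter (fun i : Fin n => (i : ℕ) < m) \
          univ.filter (fun i : Fin n => (i : ℕ) < q) := by
    ext i
    simp only [mem_filter, mem_univ, true_and, mem_sdiff]
    omega
  have hmin : univ.filter (fun i : Fin n => (i : ℕ) < m ∧ (i : ℕ) < q)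
      = univ.filter (fun i : Fin n => (i : ℕ) < min m q) := by
    simp only [lt_min_iff]
  rw [hdiff, card_sdiff, inter_comm, ← filter_and, hmin, Fin.card_filter_val_lt,
    Fin.card_filter_val_lt]
  omega

lemma add_onesFrom_le {q : ℕ} (hq : q ≤ n) (β : Fin n → Bool) : q + onesFrom β q ≤ n := by
  have hle : onesFrom β q ≤ n - q := by
    rw [onesFrom, ← card_filter_le_and_lt q n le_rfl]
    exact card_le_card fun i => by
      simp only [mem_filter, mem_univ, true_and]
      exact fun h => ⟨h.1, i.isLt⟩
  omega

lemma onesFrom_of_eq_decide {β : Fin n → Bool} {q a : ℕ} (hqa : q + a ≤ n)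
    (h : ∀ i : Fin n, q ≤ (i : ℕ) → β i = decide ((i : ℕ) < q + a)) : onesFrom β q = a := by
  rw [onesFrom, ← Nat.add_sub_cancel_left (n := q) (m := a), ← card_filter_le_and_lt q _ hqa]
  congr 1
  ext i
  simp only [mem_filter, mem_univ, true_and, and_congr_right_iff]
  intro hi
  simp [h i hi]

lemma eq_decide_of_antitoneOn {β : Fin n → Bool} {q : ℕ} (hβ : AntitoneOn β {i | q ≤ (i : ℕ)})
    (i : Fin n) (hi : q ≤ (i : ℕ)) : β i = decide ((i : ℕ) < q + onesFrom β q) := by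
  cases hβi : β i
  · have hle : onesFrom β q ≤ (i : ℕ) - q := by
      rw [onesFrom, ← card_filter_le_and_lt q i i.isLt.le]
      refine card_le_card fun j => ?_
      simp only [mem_filter, mem_univ, true_and]
      refine fun hj => ⟨hj.1, lt_of_not_ge fun hij => ?_⟩
      simpa [Bool.eq_false_of_le_false (hβi ▸ hβ hi hj.1 (Fin.le_iff_val_le_val.2 hij))] using hj.2
    rw [eq_comm, decide_eq_false_iff_not]
    omega
  · have hle : (i : ℕ) + 1 - q ≤ onesFrom β q := by
      rw [onesFrom, ← card_filter_le_and_lt q (i + 1) i.isLt]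
      refine card_le_card fun j => ?_
      simp only [mem_filter, mem_univ, true_and]
      refine fun hj => ⟨hj.1, ?_⟩
      have hij : β i ≤ β j := hβ hj.1 hi (Fin.le_iff_val_le_val.2 (by omega))
      rw [hβi] at hij
      exact top_le_iff.1 hij
    rw [eq_comm, decide_eq_true_iff]
    omega

end OnesFrom

section TailClass

variable {n : ℕ}

def tailClass (α : Fin n → Bool) (q a : ℕ) : Finset (Fin n → Bool) :=
  univ.filter fun B => (∀ i : Fin n, (i : ℕ) < q → B i = α i) ∧ onesFrom B q = a

lemma mem_tailClass {α B : Fin n → Bool} {q a : ℕ} :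
    B ∈ tailClass α q a ↔ (∀ i : Fin n, (i : ℕ) < q → B i = α i) ∧ onesFrom B q = a := by
  simp [tailClass]

lemma tailClass_congr {α β : Fin n → Bool} {q : ℕ} (h : ∀ i : Fin n, (i : ℕ) < q → α i = β i)
    (a : ℕ) : tailClass α q a = tailClass β q a := by
  ext B
  simp only [mem_tailClass]
  exact and_congr_left' (forall₂_congr fun i hi => by rw [h i hi])

def lexLowerSpan (α : Fin n → Bool) (q : ℕ) : Submodule ℚ (ExteriorAlgebra ℚ (Fin n → ℚ)) :=
  Submodule.span ℚ (thetaMon '' {B | ∃ j : Fin n, (j : ℕ) < q ∧ (∀ i < j, B i = α i) ∧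
    B j = false ∧ α j = true})

lemma thetaMon_mem_lexLowerSpan {α B : Fin n → Bool} {q : ℕ} (j : Fin n) (hj : (j : ℕ) < q)
    (hlt : ∀ i < j, B i = α i) (hBj : B j = false) (hαj : α j = true) :
    thetaMon B ∈ lexLowerSpan α q :=
  Submodule.subset_span ⟨B, ⟨j, hj, hlt, hBj, hαj⟩, rfl⟩

lemma lexLowerSpan_congr {α β : Fin n → Bool} {q : ℕ}
    (h : ∀ i : Fin n, (i : ℕ) < q → α i = β i) : lexLowerSpan α q = lexLowerSpan β q := by
  unfold lexLowerSpan
  congr 2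
  ext B
  simp only [Set.mem_ofPred_eq]
  refine exists_congr fun j => and_congr_right fun hj => ?_
  rw [h j hj, forall₂_congr fun i (hi : i < j) => by rw [h i (lt_trans hi hj)]]

lemma lexLowerSpan_mono (α : Fin n → Bool) {q q' : ℕ} (h : q ≤ q') :
    lexLowerSpan α q ≤ lexLowerSpan α q' :=
  Submodule.span_mono (Set.image_mono fun _ ⟨j, hj, hB⟩ => ⟨j, lt_of_lt_of_le hj h, hB⟩)

lemma theta_mul_mem_lexLowerSpan {α : Fin n → Bool} {p : Fin n} {x : ExteriorAlgebra ℚ (Fin n → ℚ)}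
    (hx : x ∈ lexLowerSpan α p) : theta n p * x ∈ lexLowerSpan α p := by
  suffices lexLowerSpan α p ≤ (lexLowerSpan α p).comap (LinearMap.mulLeft ℚ (theta n p)) from
    this hx
  refine Submodule.span_le.2 ?_
  rintro _ ⟨B, ⟨j, hj, hlt, hBj, hαj⟩, rfl⟩
  simp only [SetLike.mem_coe, Submodule.mem_comap, LinearMap.mulLeft_apply]
  cases hBp : B p
  · have hjp : j ≠ p := (show j < p from hj).ne
    rw [theta_mul_thetaMon_of_false hBp]
    refine Submodule.smul_mem _ _ (thetaMon_mem_lexLowerSpan j hj (fun i hi => ?_) ?_ hαj)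
    · rw [Function.update_of_ne (hi.trans (show j < p from hj)).ne, hlt i hi]
    · rw [Function.update_of_ne hjp, hBj]
  · rw [theta_mul_thetaMon_of_true hBp]
    exact Submodule.zero_mem _

end TailClass

section Recursion

variable {n : ℕ}

lemma theta_mul_sum_tailClass (α : Fin n → Bool) (p : Fin n) (a : ℕ) :
    theta n p * ∑ B ∈ tailClass α p a, thetaMon B
      = (-1 : ℚ) ^ onesBelow α p • ∑ B ∈ tailClass α p (a + 1) with B p = true, thetaMon B := by
  have hbelow : ∀ (B : Fin n → Bool) (b : Bool),
      (∀ i : Fin n, (i : ℕ) < p → Function.update B p b i = B i) := fun B b i hi =>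
    Function.update_of_ne (fun h => by rw [h] at hi; omega) _ _
  have hcount : ∀ (B : Fin n → Bool) (b : Bool),
      onesFrom (Function.update B p b) p + (B p).toNat = onesFrom B p + b.toNat := by
    intro B b
    rw [onesFrom_update_self, onesFrom_eq_toNat_add B p]
    ring
  rw [mul_sum, ← sum_filter_of_ne (p := fun B => B p = false) fun B _ hB => ?_]
  · rw [smul_sum]
    refine sum_nbij' (fun B => Function.update B p true) (fun B => Function.update B p false)
      ?_ ?_ ?_ ?_ ?_
    · intro B hB
      simp only [mem_filter, mem_tailClass] at hB ⊢
      exact ⟨⟨fun i hi => (hbelow B true i hi).trans (hB.1.1 i hi), by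
        simpa [hB.2, hB.1.2] using hcount B true⟩,
        Function.update_self ..⟩
    · intro B hB
      simp only [mem_filter, mem_tailClass] at hB ⊢
      exact ⟨⟨fun i hi => (hbelow B false i hi).trans (hB.1.1 i hi), by
        simpa [hB.2, hB.1.2] using hcount B false⟩,
        Function.update_self ..⟩
    · intro B hB
      simp only [mem_filter] at hB
      simp [← hB.2]
    · intro B hB
      simp only [mem_filter] at hB
      simp [← hB.2]
    · intro B hB
      simp only [mem_filter, mem_tailClass] at hB
      rw [theta_mul_thetaMon_of_false hB.2, onesBelow_congr hB.1.1]
  · cases hBp : B p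
    · rfl
    · exact absurd (theta_mul_thetaMon_of_true hBp) hB

lemma filter_tailClass_eq_tailClass_succ {α : Fin n → Bool} {p : Fin n} (hαp : α p = false)
    (a : ℕ) : {B ∈ tailClass α p a | ¬B p = true} = tailClass α (p + 1) a := by
  ext B
  simp only [mem_filter, mem_tailClass, Bool.not_eq_true]
  rw [onesFrom_eq_toNat_add B p]
  constructor
  · rintro ⟨⟨hlt, hcount⟩, hBp⟩
    refine ⟨fun i hi => ?_, by simpa [hBp] using hcount⟩
    rcases Nat.lt_succ_iff_lt_or_eq.1 hi with hi | hi
    · exact hlt i hi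
    · rw [Fin.ext hi, hBp, hαp]
  · rintro ⟨hlt, hcount⟩
    have hBp : B p = false := (hlt p (Nat.lt_succ_self _)).trans hαp
    exact ⟨⟨fun i hi => hlt i (Nat.lt_succ_of_lt hi), by simp [hBp, hcount]⟩, hBp⟩

lemma sum_tailClass_eq_add {α : Fin n → Bool} {p : Fin n} (hαp : α p = false) (a : ℕ) :
    ∑ B ∈ tailClass α p (a + 1), thetaMon B
      = ∑ B ∈ tailClass α (p + 1) (a + 1), thetaMon B
        + (-1 : ℚ) ^ onesBelow α p • (theta n p * ∑ B ∈ tailClass α p a, thetaMon B) := by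
  rw [theta_mul_sum_tailClass, smul_smul, ← pow_add, Even.neg_one_pow ⟨_, rfl⟩, one_smul,
    ← filter_tailClass_eq_tailClass_succ hαp, sum_filter_not_add_sum_filter]

lemma sub_mem_lexLowerSpan_of_recursion {α : Fin n → Bool} {p : Fin n} {a : ℕ}
    (hαp : α p = false) {x y : ExteriorAlgebra ℚ (Fin n → ℚ)}
    (hx : x - ∑ B ∈ tailClass α p (a + 1), thetaMon B ∈ lexLowerSpan α p)
    (hy : y - ∑ B ∈ tailClass α p a, thetaMon B ∈ lexLowerSpan α p) :
    x - (-1 : ℚ) ^ onesBelow α p • (theta n p * y) - ∑ B ∈ tailClass α (p + 1) (a + 1), thetaMon B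
      ∈ lexLowerSpan α (p + 1) := by
  have hrw : x - (-1 : ℚ) ^ onesBelow α p • (theta n p * y)
        - ∑ B ∈ tailClass α (p + 1) (a + 1), thetaMon B
      = (x - ∑ B ∈ tailClass α p (a + 1), thetaMon B) - (-1 : ℚ) ^ onesBelow α p •
          (theta n p * (y - ∑ B ∈ tailClass α p a, thetaMon B)) := by
    rw [sum_tailClass_eq_add hαp, mul_sub, smul_sub]
    abel
  rw [hrw]
  exact lexLowerSpan_mono α (Nat.le_succ _)
    (sub_mem hx (Submodule.smul_mem _ _ (theta_mul_mem_lexLowerSpan hy)))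

end Recursion

section Invariant

variable {n : ℕ}

lemma sum_tailClass_sub_sum_tailClass_succ_mem {α : Fin n → Bool} {p : Fin n}
    (hα : AntitoneOn α {i | (p : ℕ) ≤ i}) :
    ∑ B ∈ tailClass α p (onesFrom α p), thetaMon B
        - ∑ B ∈ tailClass α (p + 1) (onesFrom α (p + 1)), thetaMon B
      ∈ lexLowerSpan α (p + 1) := by
  have hsucc : ∀ B, (∀ i : Fin n, (i : ℕ) < p → B i = α i) → B p = α p →
      (B ∈ tailClass α p (onesFrom α p) ↔ B ∈ tailClass α (p + 1) (onesFrom α (p + 1))) := by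
    intro B hlt hBp
    have hlt' : ∀ i : Fin n, (i : ℕ) < p + 1 → B i = α i := fun i hi =>
      (Nat.lt_succ_iff_lt_or_eq.1 hi).elim (hlt i) fun h => by rw [Fin.ext h, hBp]
    simp only [mem_tailClass, iff_true_intro hlt, iff_true_intro hlt', true_and,
      onesFrom_eq_toNat_add B p, onesFrom_eq_toNat_add α p, hBp, Nat.add_left_cancel_iff]
  have hsub : tailClass α (p + 1) (onesFrom α (p + 1)) ⊆ tailClass α p (onesFrom α p) := by
    intro B hB
    have hlt := (mem_tailClass.1 hB).1
    exact (hsucc B (fun i hi => hlt i (Nat.lt_succ_of_lt hi)) (hlt p (Nat.lt_succ_self _))).2 hB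
  rw [← sum_sdiff hsub, add_sub_cancel_right]
  refine Submodule.sum_mem _ fun B hB => ?_
  obtain ⟨hB, hBnot⟩ := mem_sdiff.1 hB
  have hBp : B p ≠ α p := fun h => hBnot ((hsucc B (mem_tailClass.1 hB).1 h).1 hB)
  cases hαp : α p
  · -- `α` vanishes from `p` on, leaving no room for the one `B p`
    have hBp' : B p = true := by simpa [hαp] using hBp
    have hzero := eq_decide_of_antitoneOn hα p le_rfl
    rw [hαp, eq_comm, decide_eq_false_iff_not] at hzero
    have hcount := onesFrom_eq_toNat_add B p
    rw [(mem_tailClass.1 hB).2, hBp', Bool.toNat_true] at hcount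
    omega
  · exact thetaMon_mem_lexLowerSpan p (Nat.lt_succ_self _)
      (fun i hi => (mem_tailClass.1 hB).1 i hi) (by simpa [hαp] using hBp) hαp

lemma sum_tailClass_zero (α : Fin n → Bool) (s : ℕ) :
    ∑ B ∈ tailClass α 0 s, thetaMon B = Fq n s := by
  have hcard : ∀ B : Fin n → Bool, onesFrom B 0 = #(univ.filter fun i => B i = true) := by
    simp [onesFrom]
  refine sum_nbij' (fun B => univ.filter fun i => B i = true) (fun A i => decide (i ∈ A))
    ?_ ?_ ?_ ?_ fun _ _ => rfl
  · intro B hB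
    simpa [mem_tailClass, hcard] using hB
  · intro A hA
    simpa [mem_tailClass, hcard] using hA
  · intro B _
    ext i
    simp
  · intro A _
    ext i
    simp

lemma antitoneOn_of_eq_decide {β : Fin n → Bool} {q c : ℕ}
    (h : ∀ i : Fin n, q ≤ (i : ℕ) → β i = decide ((i : ℕ) < c)) :
    AntitoneOn β {i | q ≤ (i : ℕ)} := fun i hi j hj hij => by
  rw [h i hi, h j hj, Bool.le_iff_imp]
  simp only [decide_eq_true_eq]
  exact lt_of_le_of_lt (Fin.le_iff_val_le_val.1 hij)

lemma eq_zero_ones_zeros_of_not_antitoneOn {α : Fin n → Bool} {p : Fin n}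
    (hα : AntitoneOn α {i | (p : ℕ) + 1 ≤ i}) (hnot : ¬AntitoneOn α {i | (p : ℕ) ≤ i}) :
    ∃ a, onesFrom α (p + 1) = a + 1 ∧
      ∀ i : Fin n, (p : ℕ) ≤ i → α i = decide ((p : ℕ) < i ∧ (i : ℕ) ≤ p + (a + 1)) := by
  have hαp : α p = false := by
    refine Bool.eq_false_iff.2 fun hαp => hnot fun i (hi : (p : ℕ) ≤ i) j hj hij => ?_
    rcases eq_or_ne i p with rfl | hip
    · exact hαp ▸ le_top
    · have hi' : (p : ℕ) + 1 ≤ i := by have := Fin.val_ne_of_ne hip; omega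
      exact hα hi' (show (p : ℕ) + 1 ≤ j from le_trans hi' hij) hij
  have hpos : onesFrom α (p + 1) ≠ 0 := fun hzero => hnot fun i _ j (hj : (p : ℕ) ≤ j) _ => by
    suffices α j = false from this ▸ bot_le
    rcases eq_or_ne j p with rfl | hjp
    · exact hαp
    · have hj' : (p : ℕ) + 1 ≤ j := by have := Fin.val_ne_of_ne hjp; omega
      rw [eq_decide_of_antitoneOn hα j hj', hzero, decide_eq_false_iff_not]
      omega
  obtain ⟨a, ha⟩ := Nat.exists_eq_add_one_of_ne_zero hpos
  refine ⟨a, ha, fun i hi => ?_⟩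
  rcases Nat.lt_or_ge p i with hpi | hpi
  · rw [eq_decide_of_antitoneOn hα i hpi, ha, decide_eq_decide]
    omega
  · rw [show i = p from Fin.ext (by omega), hαp]
    simp

theorem sub_sum_tailClass_mem_lexLowerSpan
    {G : (Fin n → Bool) → ExteriorAlgebra ℚ (Fin n → ℚ)} (hG : GRec n G) {q : ℕ} (hq : q ≤ n)
    (α : Fin n → Bool) (hα : AntitoneOn α {i | q ≤ (i : ℕ)}) :
    G α - ∑ B ∈ tailClass α q (onesFrom α q), thetaMon B ∈ lexLowerSpan α q := by
  induction q generalizing α with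
  | zero =>
    have hαeq : (fun i : Fin n => decide ((i : ℕ) < onesFrom α 0)) = α :=
      funext fun i => by simpa using (eq_decide_of_antitoneOn hα i (Nat.zero_le _)).symm
    have hGα := hG.1 _ (by simpa using add_onesFrom_le (Nat.zero_le n) α)
    rw [hαeq] at hGα
    rw [hGα, sum_tailClass_zero, sub_self]
    exact Submodule.zero_mem _
  | succ q ih =>
    by_cases hαq : AntitoneOn α {i | q ≤ (i : ℕ)}
    · simpa using add_mem (lexLowerSpan_mono α (Nat.le_succ q) (ih (Nat.le_of_succ_le hq) α hαq))
        (sum_tailClass_sub_sum_tailClass_succ_mem (p := ⟨q, hq⟩) hαq)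
    obtain ⟨a, ha, hshape⟩ := eq_zero_ones_zeros_of_not_antitoneOn (p := ⟨q, hq⟩) hα hαq
    have hbound : q + 1 + (a + 1) ≤ n := ha ▸ add_onesFrom_le hq α
    have hrec := hG.2 α q (a + 1) (Nat.le_add_left _ _) (by omega)
    rw [show q + (a + 1) - 1 = q + a by omega] at hrec
    rw [show (fun i : Fin n => if (i : ℕ) < q then α i
        else decide (q < (i : ℕ) ∧ (i : ℕ) ≤ q + (a + 1))) = α from
      funext fun i => (ite_eq_left_iff.2 fun hi => (hshape i (not_lt.1 hi)).symm)] at hrec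
    have hfill : ∀ c, q + c ≤ n → G (fun i => if (i : ℕ) < q then α i
        else decide ((i : ℕ) < q + c)) - ∑ B ∈ tailClass α q c, thetaMon B ∈ lexLowerSpan α q := by
      intro c hc
      have hβ : ∀ i : Fin n, q ≤ (i : ℕ) → (if (i : ℕ) < q then α i
          else decide ((i : ℕ) < q + c)) = decide ((i : ℕ) < q + c) := fun i hi =>
        if_neg (not_lt.2 hi)
      have hagree : ∀ i : Fin n, (i : ℕ) < q → (if (i : ℕ) < q then α i
          else decide ((i : ℕ) < q + c)) = α i := fun i hi => if_pos hi
      have := ih (by omega) _ (antitoneOn_of_eq_decide hβ)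
      rwa [onesFrom_of_eq_decide hc hβ, tailClass_congr hagree, lexLowerSpan_congr hagree] at this
    have hαzero : α ⟨q, hq⟩ = false := by simpa using hshape ⟨q, hq⟩ le_rfl
    rw [hrec, ha]
    exact sub_mem_lexLowerSpan_of_recursion hαzero (hfill _ (by omega)) (hfill _ (by omega))

lemma tailClass_length_eq_singleton (α : Fin n → Bool) :
    tailClass α n (onesFrom α n) = {α} := by
  have hzero : ∀ B : Fin n → Bool, onesFrom B n = 0 := fun B =>
    card_eq_zero.2 (filter_eq_empty_iff.2 fun i _ h => absurd i.isLt (not_lt.2 h.1))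
  ext B
  simp only [mem_tailClass, hzero, and_true, mem_singleton, funext_iff]
  exact forall_congr' fun i => imp_iff_right i.isLt

lemma lexLowerSpan_length_eq (α : Fin n → Bool) :
    lexLowerSpan α n = Submodule.span ℚ (thetaMon '' ↑(univ.filter fun β => LexLt β α)) := by
  unfold lexLowerSpan LexLt
  congr 2
  ext B
  simp

end Invariant

/-- The lexicographically largest monomial appearing in `G_α` is `θ^α`, with
coefficient `1`: `G_α = θ^α + Σ_{β <_lex α} c_β θ^β`. -/
theorem stmt16 (n : ℕ) (G : (Fin n → Bool) → ExteriorAlgebra ℚ (Fin n → ℚ))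
    (hG : GRec n G) (α : Fin n → Bool) :
    ∃ c : (Fin n → Bool) → ℚ,
      G α = thetaMon α +
        ∑ β ∈ Finset.univ.filter (fun β => LexLt β α), c β • thetaMon β := by
  have h := sub_sum_tailClass_mem_lexLowerSpan hG le_rfl α
    fun i (hi : n ≤ (i : ℕ)) => absurd i.isLt (not_lt.2 hi)
  rw [tailClass_length_eq_singleton, sum_singleton, lexLowerSpan_length_eq] at h
  obtain ⟨c, hc⟩ := (Submodule.mem_span_image_finset_iff_exists_fun' ℚ).1 h
  exact ⟨c, by rw [hc, add_sub_cancel]⟩
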